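/- Let m be a positive integer and let x be a real number with |x| ≤ 1/(4m). Then the series Σ_{n≥0} m^{n+1}·catalan(n)·x^{n+1} converges with sum (1 − √(1 − 4mx))/2; that is, the family (fun n : ℕ => m^{n+1}·catalan(n)·x^{n+1}) has sum (1 − √(1 − 4mx))/2. -/

import Mathlib

open Finset

private lemma catalan_div_four_pow (n : ℕ) :
    (catalan n : ℝ) / 4 ^ (n + 1) =
      ((Nat.centralBinom n : ℝ) / 4 ^ n - (Nat.centralBinom (n + 1) : ℝ) / 4 ^ (n + 1)) / 2 := by
  have h1 : ((n : ℝ) + 1) * (catalan n : ℝ) = Nat.centralBinom n := by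
    exact_mod_cast congrArg (Nat.cast : ℕ → ℝ) (succ_mul_catalan_eq_centralBinom n)
  have h2 : ((n : ℝ) + 1) * (Nat.centralBinom (n + 1) : ℝ)
      = 2 * (2 * n + 1) * Nat.centralBinom n := by
    exact_mod_cast congrArg (Nat.cast : ℕ → ℝ) (Nat.succ_mul_centralBinom_succ n)
  have hn : ((n : ℝ) + 1) ≠ 0 := by positivity
  have h4 : (4 : ℝ) ^ (n + 1) ≠ 0 := by positivity
  have h4' : (4 : ℝ) ^ n ≠ 0 := by positivity
  have hc : (catalan n : ℝ) = (Nat.centralBinom n : ℝ) / ((n:ℝ) + 1) := by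
    rw [eq_div_iff hn]; linarith [h1]
  have hcb : (Nat.centralBinom (n+1) : ℝ)
      = 2 * (2 * (n:ℝ) + 1) * (Nat.centralBinom n : ℝ) / ((n:ℝ) + 1) := by
    rw [eq_div_iff hn]; linarith [h2]
  rw [hc, hcb, pow_succ]
  field_simp
  ring

private lemma catalan_aux (y : ℝ) (hy : |y| ≤ 1 / 4) :
    HasSum (fun n : ℕ => (catalan n : ℝ) * y ^ (n + 1))
      ((1 - Real.sqrt (1 - 4 * y)) / 2) := by
  set t : ℕ → ℝ := fun n => (Nat.centralBinom n : ℝ) / 4 ^ n with ht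
  have htnonneg : ∀ n, 0 ≤ t n := fun n => by positivity
  have hd : ∀ n : ℕ, (catalan n : ℝ) / 4 ^ (n + 1) = (t n - t (n + 1)) / 2 :=
    catalan_div_four_pow
  have hdnonneg : ∀ n : ℕ, (0:ℝ) ≤ (catalan n : ℝ) / 4 ^ (n + 1) := fun n => by positivity
  have hpartial : ∀ N : ℕ, ∑ n ∈ range N, (catalan n : ℝ) / 4 ^ (n + 1)
      = (t 0 - t N) / 2 := by
    intro N
    simp_rw [hd]
    rw [← Finset.sum_div, Finset.sum_range_sub' t]
  have hsumd : Summable (fun n : ℕ => (catalan n : ℝ) / 4 ^ (n + 1)) := by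
    apply summable_of_sum_range_le hdnonneg (c := 1/2)
    intro N
    rw [hpartial]
    have := htnonneg N
    have : t 0 = 1 := by simp [ht, Nat.centralBinom]
    simp only [this]
    linarith [htnonneg N]
  have htsumd : ∑' n, (catalan n : ℝ) / 4 ^ (n + 1) ≤ 1 / 2 := by
    apply Real.tsum_le_of_sum_range_le hdnonneg
    intro N
    rw [hpartial]
    have h0 : t 0 = 1 := by simp [ht, Nat.centralBinom]
    rw [h0]
    linarith [htnonneg N]
  set f : ℕ → ℝ := fun n => (catalan n : ℝ) * y ^ (n + 1) with hf
  have hbound : ∀ n, ‖f n‖ ≤ (catalan n : ℝ) / 4 ^ (n + 1) := by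
    intro n
    have : ‖f n‖ = (catalan n : ℝ) * |y| ^ (n + 1) := by
      simp [hf, abs_mul, abs_pow, abs_of_nonneg (by positivity : (0:ℝ) ≤ (catalan n : ℝ))]
    rw [this]
    have h1 : |y| ^ (n+1) ≤ (1/4 : ℝ) ^ (n+1) :=
      pow_le_pow_left₀ (abs_nonneg y) hy (n+1)
    calc (catalan n : ℝ) * |y| ^ (n + 1) ≤ (catalan n : ℝ) * (1/4) ^ (n+1) := by
          exact mul_le_mul_of_nonneg_left h1 (by positivity)
      _ = (catalan n : ℝ) / 4 ^ (n + 1) := by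
          rw [div_pow, one_pow]; ring
  have hnorm : Summable (fun n => ‖f n‖) :=
    Summable.of_nonneg_of_le (fun n => norm_nonneg _) hbound hsumd
  have hsumf : Summable f := hnorm.of_norm
  set L : ℝ := ∑' n, f n with hL
  have hLle : L ≤ 1 / 2 := by
    calc L ≤ ∑' n, ‖f n‖ := by
          apply Summable.tsum_le_tsum _ hsumf hnorm
          intro n; exact le_abs_self _
      _ ≤ ∑' n, (catalan n : ℝ) / 4 ^ (n + 1) := Summable.tsum_le_tsum hbound hnorm hsumd
      _ ≤ 1 / 2 := htsumd
  -- Cauchy product: L^2 = L - y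
  have hcauchy : L * L = ∑' n, ∑ k ∈ range (n + 1), f k * f (n - k) :=
    tsum_mul_tsum_eq_tsum_sum_range_of_summable_norm hnorm hnorm
  have hinner : ∀ n : ℕ, ∑ k ∈ range (n + 1), f k * f (n - k)
      = (catalan (n+1) : ℝ) * y ^ (n + 2) := by
    intro n
    have hcat : (catalan (n+1) : ℝ) = ∑ k ∈ range (n + 1), (catalan k : ℝ) * (catalan (n - k) : ℝ) := by
      rw [catalan_succ']
      rw [Nat.sum_antidiagonal_eq_sum_range_succ (fun a b => catalan a * catalan b) n]
      push_cast
      rfl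
    rw [hcat, Finset.sum_mul]
    apply Finset.sum_congr rfl
    intro k hk
    have hk' : k ≤ n := Nat.lt_succ_iff.mp (Finset.mem_range.mp hk)
    have : (n - k + 1) + (k + 1) = n + 2 := by omega
    simp only [hf]
    rw [← this, pow_add]
    ring
  have hshift : HasSum (fun n : ℕ => f (n + 1)) (L - y) := by
    have := hsumf.hasSum
    have h01 : ∑ i ∈ range 1, f i = y := by simp [hf]
    rw [← h01]
    exact (hasSum_nat_add_iff' 1).mpr hsumf.hasSum
  have hquad : L * L = L - y := by
    rw [hcauchy]
    have : ∀ n, ∑ k ∈ range (n + 1), f k * f (n - k) = f (n + 1) := by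
      intro n; rw [hinner n]
    simp_rw [this]
    exact hshift.tsum_eq
  -- solve the quadratic
  have hynn : (0:ℝ) ≤ 1 - 4 * y := by
    have := abs_le.mp hy
    linarith [this.2]
  have hsq : (1/2 - L) ^ 2 = (1 - 4 * y) / 4 := by nlinarith [hquad]
  have hLhalf : 0 ≤ 1/2 - L := by linarith
  have hroot : 1/2 - L = Real.sqrt (1 - 4*y) / 2 := by
    have h4 : Real.sqrt 4 = 2 := by
      rw [show (4:ℝ) = 2^2 by norm_num, Real.sqrt_sq (by norm_num : (0:ℝ) ≤ 2)]
    rw [← Real.sqrt_sq hLhalf, hsq, Real.sqrt_div hynn, h4]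
  have hLval : L = (1 - Real.sqrt (1 - 4 * y)) / 2 := by linarith
  rw [← hLval]
  exact hsumf.hasSum

theorem godelm_ogf_closed_form
    (m : ℕ) (hm : 0 < m) (x : ℝ) (hx : |x| ≤ 1 / (4 * (m : ℝ))) :
    HasSum (fun n : ℕ => (m : ℝ) ^ (n + 1) * (catalan n : ℝ) * x ^ (n + 1))
      ((1 - Real.sqrt (1 - 4 * (m : ℝ) * x)) / 2) := by
  have hm' : (0:ℝ) < m := by exact_mod_cast hm
  have hy : |(m : ℝ) * x| ≤ 1 / 4 := by
    rw [abs_mul, abs_of_pos hm']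
    calc (m:ℝ) * |x| ≤ (m:ℝ) * (1 / (4 * m)) := by
          exact mul_le_mul_of_nonneg_left hx hm'.le
      _ = 1 / 4 := by field_simp
  have := catalan_aux ((m:ℝ) * x) hy
  have heq : (fun n : ℕ => (catalan n : ℝ) * ((m:ℝ) * x) ^ (n + 1))
      = fun n : ℕ => (m : ℝ) ^ (n + 1) * (catalan n : ℝ) * x ^ (n + 1) := by
    funext n; rw [mul_pow]; ring
  rw [heq] at this
  rw [show 1 - 4 * (m:ℝ) * x = 1 - 4 * ((m:ℝ)*x) by ring]
  exact this
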